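/- Let T be a selfadjoint operator on a Hilbert space H with spectral measure P^(T) and let h : ℝ → ℝ be Borel measurable. Then for every bounded Borel function f : ℝ → ℂ, ∫_ℝ f(λ) dP^{(h(T))}(λ) = ∫_ℝ f(h(λ)) dP^{(T)}(λ), i.e. f(h(T)) = (f ∘ h)(T). -/

import Mathlib

/-! Pairing with vectors `φ, ψ` turns the operator identity into
`∫ f ρ dm = ∫ (f ∘ h) ρ' dm'` for the spectral densities of `h(T)` and `T`. For indicators of
Borel sets this is the linking condition, for simple functions it follows by linearity, and for
bounded Borel `f` by dominated convergence along a uniformly bounded simple approximation,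
everything being dominated by a constant multiple of the integrable density. -/

open MeasureTheory

/-- `Calc` is the Borel functional calculus of a selfadjoint operator: for all vectors
`φ, ψ` there is a complex spectral measure `dμ_{φ,ψ} = ρ dm` (with `m` a finite positive
measure) such that `⟨φ | Calc g ψ⟩ = ∫ g dμ_{φ,ψ}` for every bounded Borel `g`. -/
def IsBorelFunctionalCalculus {H : Type*} [NormedAddCommGroup H] [InnerProductSpace ℂ H]
    (Calc : (ℝ → ℂ) → H →L[ℂ] H) : Prop :=
  ∀ φ ψ : H, ∃ m : Measure ℝ, IsFiniteMeasure m ∧ ∃ ρ : ℝ → ℂ, Integrable ρ m ∧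
    ∀ g : ℝ → ℂ, Measurable g → (∃ C, ∀ x, ‖g x‖ ≤ C) →
      (inner ℂ φ (Calc g ψ) : ℂ) = ∫ x, g x * ρ x ∂m

namespace MeasureTheory

open Filter Topology

variable {α β 𝕜 : Type*} [MeasurableSpace α] [MeasurableSpace β] [RCLike 𝕜]
  {μ : Measure α} {ν : Measure β} {ρ : α → 𝕜} {σ : β → 𝕜}

theorem integral_indicator_one_mul {s : Set α} (hs : MeasurableSet s) :
    ∫ x, s.indicator (fun _ => (1 : 𝕜)) x * ρ x ∂μ = ∫ x in s, ρ x ∂μ := by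
  simp_rw [← Set.indicator_mul_left, one_mul, integral_indicator hs]

theorem tendsto_integral_mul_of_norm_le {g : ℕ → α → 𝕜} {f : α → 𝕜} {C : ℝ}
    (hρ : Integrable ρ μ) (hg : ∀ n, AEStronglyMeasurable (g n) μ)
    (hgC : ∀ n x, ‖g n x‖ ≤ C) (hgf : ∀ x, Tendsto (fun n => g n x) atTop (𝓝 (f x))) :
    Tendsto (fun n => ∫ x, g n x * ρ x ∂μ) atTop (𝓝 (∫ x, f x * ρ x ∂μ)) := by
  refine tendsto_integral_of_dominated_convergence (fun x => C * ‖ρ x‖)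
    (fun n => (hg n).mul hρ.1) (hρ.norm.const_mul C) (fun n => ae_of_all _ fun x => ?_)
    (ae_of_all _ fun x => (hgf x).mul tendsto_const_nhds)
  rw [norm_mul]
  exact mul_le_mul_of_nonneg_right (hgC n x) (norm_nonneg _)

variable {h : β → α}

theorem integral_simpleFunc_mul_eq_of_forall_setIntegral (hρ : Integrable ρ μ)
    (hσ : Integrable σ ν) (hh : Measurable h)
    (hset : ∀ s, MeasurableSet s → ∫ x in s, ρ x ∂μ = ∫ x in h ⁻¹' s, σ x ∂ν)
    (g : SimpleFunc α 𝕜) :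
    ∫ x, g x * ρ x ∂μ = ∫ x, g (h x) * σ x ∂ν := by
  induction g using SimpleFunc.induction with
  | @const c s hs =>
    have hρs x : SimpleFunc.piecewise s hs (.const α c) (.const α 0) x * ρ x =
        c * s.indicator ρ x := by
      by_cases hx : x ∈ s <;> simp [hx]
    have hσs x : SimpleFunc.piecewise s hs (.const α c) (.const α 0) (h x) * σ x =
        c * (h ⁻¹' s).indicator σ x := by
      by_cases hx : h x ∈ s <;> simp [hx]
    simp_rw [hρs, hσs, integral_const_mul, integral_indicator hs, integral_indicator (hh hs),
      hset s hs]
  | @add g₁ g₂ _ hg₁ hg₂ =>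
    obtain ⟨C₁, hC₁⟩ := g₁.exists_forall_norm_le
    obtain ⟨C₂, hC₂⟩ := g₂.exists_forall_norm_le
    simp only [SimpleFunc.coe_add, Pi.add_apply, add_mul]
    rw [integral_add (hρ.bdd_mul g₁.aestronglyMeasurable (ae_of_all _ hC₁))
        (hρ.bdd_mul g₂.aestronglyMeasurable (ae_of_all _ hC₂)),
      integral_add
        (hσ.bdd_mul (f := fun x => g₁ (h x)) (g₁.measurable.comp hh).aestronglyMeasurable
          (ae_of_all _ fun x => hC₁ (h x)))
        (hσ.bdd_mul (f := fun x => g₂ (h x)) (g₂.measurable.comp hh).aestronglyMeasurable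
          (ae_of_all _ fun x => hC₂ (h x))), hg₁, hg₂]

theorem integral_mul_eq_of_forall_setIntegral (hρ : Integrable ρ μ)
    (hσ : Integrable σ ν) (hh : Measurable h)
    (hset : ∀ s, MeasurableSet s → ∫ x in s, ρ x ∂μ = ∫ x in h ⁻¹' s, σ x ∂ν)
    {f : α → 𝕜} (hf : Measurable f) {C : ℝ} (hC : ∀ x, ‖f x‖ ≤ C) :
    ∫ x, f x * ρ x ∂μ = ∫ x, f (h x) * σ x ∂ν := by
  let g n := SimpleFunc.approxOn f hf Set.univ 0 (Set.mem_univ 0) n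
  have hgC n x : ‖g n x‖ ≤ C + C :=
    (SimpleFunc.norm_approxOn_zero_le hf _ x n).trans (add_le_add (hC x) (hC x))
  have hgf x : Tendsto (fun n => g n x) atTop (𝓝 (f x)) :=
    SimpleFunc.tendsto_approxOn hf (Set.mem_univ 0) (by simp)
  refine tendsto_nhds_unique
    (tendsto_integral_mul_of_norm_le hρ (fun n => (g n).aestronglyMeasurable) hgC hgf) ?_
  simp_rw [integral_simpleFunc_mul_eq_of_forall_setIntegral hρ hσ hh hset]
  exact tendsto_integral_mul_of_norm_le hσ
    (fun n => ((g n).measurable.comp hh).aestronglyMeasurable) (fun n x => hgC n (h x))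
    (fun x => hgf (h x))

end MeasureTheory

/-- Let `T` be a selfadjoint operator with Borel functional calculus `Calc`, `h : ℝ → ℝ`
Borel, and let `CalcH` be the Borel functional calculus of `h(T)`, whose spectral measure
`P^{(h(T))}` is the pushforward of `P^{(T)}` under `h` (the linking condition on
indicator functions).  Then for every bounded Borel `f : ℝ → ℂ`,
`f(h(T)) = (f ∘ h)(T)`, i.e. `∫ f dP^{(h(T))} = ∫ f ∘ h dP^{(T)}`. -/
theorem stmt_10 {H : Type*} [NormedAddCommGroup H] [InnerProductSpace ℂ H]
    (Calc CalcH : (ℝ → ℂ) → H →L[ℂ] H)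
    (hCalc : IsBorelFunctionalCalculus Calc)
    (hCalcH : IsBorelFunctionalCalculus CalcH)
    (h : ℝ → ℝ) (hh : Measurable h)
    (hlink : ∀ E : Set ℝ, MeasurableSet E →
      CalcH (Set.indicator E fun _ => (1 : ℂ)) =
        Calc (Set.indicator (h ⁻¹' E) fun _ => (1 : ℂ))) :
    ∀ f : ℝ → ℂ, Measurable f → (∃ C, ∀ x, ‖f x‖ ≤ C) → CalcH f = Calc (f ∘ h) := by
  rintro f hf ⟨C, hC⟩
  ext ψ
  refine ext_inner_left ℂ fun φ => ?_
  obtain ⟨m₁, -, ρ₁, hρ₁, hspec₁⟩ := hCalcH φ ψ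
  obtain ⟨m₂, -, ρ₂, hρ₂, hspec₂⟩ := hCalc φ ψ
  have hindicator_bdd (s : Set ℝ) : ∃ C, ∀ x, ‖s.indicator (fun _ => (1 : ℂ)) x‖ ≤ C :=
    ⟨1, fun x => norm_indicator_le_norm_self _ x |>.trans_eq norm_one⟩
  rw [hspec₁ f hf ⟨C, hC⟩, hspec₂ (f ∘ h) (hf.comp hh) ⟨C, fun x => hC (h x)⟩]
  refine integral_mul_eq_of_forall_setIntegral hρ₁ hρ₂ hh (fun s hs => ?_) hf hC
  have hs' := hh hs
  rw [← integral_indicator_one_mul hs, ← integral_indicator_one_mul hs',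
    ← hspec₁ _ (measurable_const.indicator hs) (hindicator_bdd s),
    ← hspec₂ _ (measurable_const.indicator hs') (hindicator_bdd _), hlink s hs]
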